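/- arXiv:2003.02077 — 2 statements merged into one kernel-verified Lean document; each statement's English description precedes it below -/
import Mathlib

section
/- Let a, b, h, K, G be as in the general extension setup, with K(·,λ) satisfying B K(·,λ) = λK(·,λ), K(0,λ)=1, K(y,λ)→0 as y→∞, and suitable decay of K and ∂_yK. Then for every λ > 0, ∫₀^∞ G(∞,y)(∂_y K(y,λ))² a(y)² dy = 1/2 − λ ∫₀^∞ G(∞,y) K(y,λ)² dy. -/
open MeasureTheory Set Filter Topology

/-- General integration by parts identity for the multiplier symbol:
`∫₀^∞ G(∞,y)(∂_y K(y,λ))² a(y)² dy = 1/2 − λ ∫₀^∞ G(∞,y) K(y,λ)² dy`,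
where `B K(·,λ) = λ K(·,λ)`, `K(0,λ) = 1`, `K(y,λ) → 0` as `y → ∞`, with vanishing
boundary terms and suitable integrability. -/
theorem multiplier_symbol_identity
    (a b h K Ginf : ℝ → ℝ) (lam : ℝ) (hlam : 0 < lam)
    (ha_pos : ∀ y ∈ Set.Ioi (0:ℝ), 0 < a y)
    (hh_pos : ∀ y ∈ Set.Ioi (0:ℝ), 0 < h y)
    (ha_smooth : ContDiffOn ℝ (⊤ : ℕ∞) a (Set.Ioi 0))
    (hh_smooth : ContDiffOn ℝ (⊤ : ℕ∞) h (Set.Ioi 0))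
    (hK_smooth : ContDiffOn ℝ (⊤ : ℕ∞) K (Set.Ioi 0))
    (hb : ∀ y ∈ Set.Ioi (0:ℝ), b y = (a y)^2 * deriv h y / h y)
    (hint0 : MeasureTheory.IntegrableOn (fun w => (h w)⁻¹) (Set.Ioc 0 1))
    (hGdef : ∀ y, Ginf y = h y / (a y)^2 * ∫ w in (0:ℝ)..y, (h w)⁻¹)
    (hODE : ∀ y ∈ Set.Ioi (0:ℝ),
      (a y)^2 * iteratedDeriv 2 K y + b y * deriv K y = lam * K y)
    (hK0 : Filter.Tendsto K (nhdsWithin 0 (Set.Ioi 0)) (nhds 1))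
    (hKinf : Filter.Tendsto K Filter.atTop (nhds 0))
    (hbdry_inf : Filter.Tendsto (fun y => K y * deriv K y * Ginf y * (a y)^2)
      Filter.atTop (nhds 0))
    (hbdry_0 : Filter.Tendsto (fun y => K y * deriv K y * Ginf y * (a y)^2)
      (nhdsWithin 0 (Set.Ioi 0)) (nhds 0))
    (hint1 : MeasureTheory.IntegrableOn
      (fun y => Ginf y * (deriv K y)^2 * (a y)^2) (Set.Ioi 0))
    (hint2 : MeasureTheory.IntegrableOn (fun y => Ginf y * (K y)^2) (Set.Ioi 0))
    (hint3 : MeasureTheory.IntegrableOn (fun y => K y * deriv K y) (Set.Ioi 0)) :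
    ∫ y in Set.Ioi (0:ℝ), Ginf y * (deriv K y)^2 * (a y)^2
      = 1/2 - lam * ∫ y in Set.Ioi (0:ℝ), Ginf y * (K y)^2 := by
  classical
  set I : ℝ → ℝ := fun y => ∫ w in (0:ℝ)..y, (h w)⁻¹ with hIdef
  set Φ : ℝ → ℝ := fun y => K y * deriv K y * (h y * I y) - K y ^ 2 / 2 with hΦdef
  set f : ℝ → ℝ := fun y => Ginf y * (deriv K y)^2 * (a y)^2
      + lam * (Ginf y * (K y)^2) with hfdef
  -- basic facts
  have haK : ∀ y ∈ Set.Ioi (0:ℝ), Ginf y * (a y)^2 = h y * I y := by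
    intro y hy
    have hA : a y ≠ 0 := (ha_pos y hy).ne'
    rw [hGdef y]
    show h y / a y ^ 2 * (∫ w in (0:ℝ)..y, (h w)⁻¹) * a y ^ 2
      = h y * ∫ w in (0:ℝ)..y, (h w)⁻¹
    field_simp
  -- integrability of h⁻¹
  have hinv_int : ∀ t : ℝ, IntegrableOn (fun w => (h w)⁻¹) (Set.Ioc 0 t) := by
    intro t
    rcases le_or_gt t 1 with h1 | h1
    · exact hint0.mono_set (Set.Ioc_subset_Ioc_right h1)
    · have hun : Set.Ioc (0:ℝ) t = Set.Ioc 0 1 ∪ Set.Ioc 1 t :=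
        (Set.Ioc_union_Ioc_eq_Ioc zero_le_one h1.le).symm
      rw [hun]
      refine hint0.union ?_
      have hsub : Set.Icc (1:ℝ) t ⊆ Set.Ioi 0 := fun x hx => lt_of_lt_of_le one_pos hx.1
      have hc : ContinuousOn (fun w => (h w)⁻¹) (Set.Icc 1 t) := by
        refine ContinuousOn.inv₀ (hh_smooth.continuousOn.mono hsub) ?_
        intro x hx; exact (hh_pos x (hsub hx)).ne'
      exact (hc.integrableOn_compact isCompact_Icc).mono_set Set.Ioc_subset_Icc_self
  -- derivative of I
  have hIderiv : ∀ y ∈ Set.Ioi (0:ℝ), HasDerivAt I ((h y)⁻¹) y := by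
    intro y hy
    have hii : IntervalIntegrable (fun w => (h w)⁻¹) volume 0 y := by
      rw [intervalIntegrable_iff_integrableOn_Ioc_of_le (le_of_lt hy)]
      exact hinv_int y
    have hcont : ContinuousOn (fun w => (h w)⁻¹) (Set.Ioi 0) := by
      refine ContinuousOn.inv₀ hh_smooth.continuousOn ?_
      intro x hx; exact (hh_pos x hx).ne'
    have hmeas : StronglyMeasurableAtFilter (fun w => (h w)⁻¹) (nhds y) :=
      hcont.stronglyMeasurableAtFilter isOpen_Ioi y hy
    have hcy : ContinuousAt (fun w => (h w)⁻¹) y :=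
      hcont.continuousAt (Ioi_mem_nhds hy)
    exact intervalIntegral.integral_hasDerivAt_right hii hmeas hcy
  -- differentiability of K, deriv K, h
  have hKd : ∀ y ∈ Set.Ioi (0:ℝ), HasDerivAt K (deriv K y) y := by
    intro y hy
    exact ((hK_smooth.differentiableOn (by simp)).differentiableAt
      (Ioi_mem_nhds hy)).hasDerivAt
  have hK'smooth : ContDiffOn ℝ (⊤ : ℕ∞) (deriv K) (Set.Ioi 0) := by
    exact hK_smooth.deriv_of_isOpen isOpen_Ioi (m := (⊤ : ℕ∞)) (by simp)
  have hK'd : ∀ y ∈ Set.Ioi (0:ℝ), HasDerivAt (deriv K) (deriv (deriv K) y) y := by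
    intro y hy
    exact ((hK'smooth.differentiableOn (by simp)).differentiableAt
      (Ioi_mem_nhds hy)).hasDerivAt
  have hhd : ∀ y ∈ Set.Ioi (0:ℝ), HasDerivAt h (deriv h y) y := by
    intro y hy
    exact ((hh_smooth.differentiableOn (by simp)).differentiableAt
      (Ioi_mem_nhds hy)).hasDerivAt
  -- derivative of Φ
  have hΦderiv : ∀ y ∈ Set.Ioi (0:ℝ), HasDerivAt Φ (f y) y := by
    intro y hy
    have hA : a y ≠ 0 := (ha_pos y hy).ne'
    have hH : h y ≠ 0 := (hh_pos y hy).ne'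
    have hd1 : HasDerivAt (fun z => K z * deriv K z * (h z * I z))
        ((deriv K y * deriv K y + K y * deriv (deriv K) y) * (h y * I y)
          + K y * deriv K y * (deriv h y * I y + h y * (h y)⁻¹)) y :=
      (((hKd y hy).mul (hK'd y hy))).mul ((hhd y hy).mul (hIderiv y hy))
    have hd2 : HasDerivAt (fun z => K z ^ 2 / 2) (K y * deriv K y) y := by
      have h2 := ((hKd y hy).pow 2).div_const 2
      refine h2.congr_deriv ?_
      ring
    have hd := hd1.sub hd2
    refine hd.congr_deriv ?_
    symm
    -- algebraic identity via the ODE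
    have hODE' := hODE y hy
    rw [hb y hy] at hODE'
    rw [iteratedDeriv_succ, iteratedDeriv_one] at hODE'
    have hODE'' : (a y)^2 * deriv (deriv K) y * h y + (a y)^2 * deriv h y * deriv K y
        = lam * K y * h y := by
      field_simp at hODE'
      linarith [hODE']
    have hG : Ginf y = h y / (a y)^2 * I y := hGdef y
    have hfy : f y = Ginf y * (deriv K y)^2 * (a y)^2 + lam * (Ginf y * (K y)^2) := rfl
    rw [hfy, hG]
    field_simp
    linear_combination (-(K y * I y)) * hODE''
  -- boundary behaviour
  have heq_on : ∀ y ∈ Set.Ioi (0:ℝ),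
      K y * deriv K y * Ginf y * (a y)^2 = K y * deriv K y * (h y * I y) := by
    intro y hy
    rw [← haK y hy]; ring
  have hΦ_inf : Tendsto Φ atTop (nhds 0) := by
    have h1 : Tendsto (fun y => K y * deriv K y * (h y * I y)) atTop (nhds 0) := by
      refine hbdry_inf.congr' ?_
      filter_upwards [Ioi_mem_atTop (0:ℝ)] with y hy using heq_on y hy
    have h2 : Tendsto (fun y => K y ^ 2 / 2) atTop (nhds 0) := by
      have := ((hKinf.mul hKinf).div_const 2)
      simpa [pow_two] using this
    simpa using h1.sub h2
  have hΦ_0 : Tendsto Φ (nhdsWithin 0 (Set.Ioi 0)) (nhds (-(1/2))) := by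
    have h1 : Tendsto (fun y => K y * deriv K y * (h y * I y))
        (nhdsWithin 0 (Set.Ioi 0)) (nhds 0) := by
      refine hbdry_0.congr' ?_
      filter_upwards [self_mem_nhdsWithin] with y hy using heq_on y hy
    have h2 : Tendsto (fun y => K y ^ 2 / 2) (nhdsWithin 0 (Set.Ioi 0)) (nhds (1/2)) := by
      have := (hK0.mul hK0).div_const 2
      simpa [pow_two] using this
    have := h1.sub h2
    simpa using this
  -- modified function continuous at 0
  set F : ℝ → ℝ := Function.update Φ 0 (-(1/2)) with hFdef
  have hFcont : ContinuousWithinAt F (Set.Ici 0) 0 := by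
    rw [hFdef, continuousWithinAt_update_same]
    have : Set.Ici (0:ℝ) \ {0} = Set.Ioi 0 := Set.Ici_sdiff_left
    rw [this]
    exact hΦ_0
  have hFderiv : ∀ x ∈ Set.Ioi (0:ℝ), HasDerivAt F (f x) x := by
    intro x hx
    refine (hΦderiv x hx).congr_of_eventuallyEq ?_
    filter_upwards [Ioi_mem_nhds hx] with z hz
    exact Function.update_of_ne hz.ne' _ _
  have hFinf : Tendsto F atTop (nhds 0) := by
    refine hΦ_inf.congr' ?_
    filter_upwards [Ioi_mem_atTop (0:ℝ)] with y hy
    exact (Function.update_of_ne hy.ne' _ _).symm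
  have hfint : IntegrableOn f (Set.Ioi 0) := hint1.add (hint2.const_mul lam)
  have hmain : ∫ y in Set.Ioi (0:ℝ), f y = 1/2 := by
    have := integral_Ioi_of_hasDerivAt_of_tendsto hFcont hFderiv hfint hFinf
    rw [this, hFdef, Function.update_self]
    norm_num
  have hsplit : ∫ y in Set.Ioi (0:ℝ), f y
      = (∫ y in Set.Ioi (0:ℝ), Ginf y * (deriv K y)^2 * (a y)^2)
        + lam * ∫ y in Set.Ioi (0:ℝ), Ginf y * (K y)^2 := by
    rw [hfdef]
    rw [integral_add hint1 (hint2.const_mul lam), integral_const_mul]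
  rw [hsplit] at hmain
  linarith
end

section
/- For 0 < s < 1 and λ > 0, with K(y,λ) = (2^{1−s}/Γ(s)) y^s λ^{s/2} K_s(yλ^{1/2}) and G(∞,y) = y/(2s), one has ∫₀^∞ G(∞,y) (∂_y K(y,λ))² dy = 1/(2(2−γ)) where γ = 1 − 2s; i.e. the multiplier for the Bessel vertical diffusion is the constant 1/(2(1+2s)). -/
/-!
Substituting `t ↦ c / t` in the integral defining `besselK` gives
`K(y, λ) = M_{s-1}(λy²/4) / Γ(s)` with `M_a(c) = ∫₀^∞ u^a e^{-u-c/u} du`,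
and `M_a' = -M_{a-1}`. The substitution `t = λy²/4` then turns the multiplier into
`(s Γ(s)²)⁻¹ ∫₀^∞ t M_{s-2}(t)² dt`.

Expanding the square and integrating in `t` first (Tonelli) gives
`∫₀^∞ t (∫ φ(u) e^{-t ψ(u)} du)² dt = ∫∫ φ(u) φ(v) / (ψ(u) + ψ(v))² du dv`.
For `φ(u) = u^{s-2} e^{-u}`, `ψ(u) = 1/u` the right side is also the one for
`φ(u) = u^s e^{-u}`, `ψ(u) = u`, and reading the identity backwards for that pair gives
`∫₀^∞ r (Γ(s+1) (1+r)^{-s-1})² dr = Γ(s+1)² / (2s(2s+1))`.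
-/

open MeasureTheory Set Filter Topology Real

/-- The MacDonald function (modified Bessel function of the second kind). -/
noncomputable def besselK (s x : ℝ) : ℝ :=
  (1/2) * (x/2) ^ s * ∫ t in Set.Ioi (0:ℝ), t ^ (-1 - s) * Real.exp (-t - x^2/(4*t))

open scoped ENNReal

theorem integrableOn_rpow_mul_exp_neg_mul_Ioi {a r : ℝ} (ha : -1 < a) (hr : 0 < r) :
    IntegrableOn (fun u : ℝ => u ^ a * exp (-(r * u))) (Ioi 0) := by
  simpa [neg_mul] using integrableOn_rpow_mul_exp_neg_mul_rpow ha one_pos hr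

theorem lintegral_rpow_mul_exp_neg_mul_Ioi {a r : ℝ} (ha : 0 < a) (hr : 0 < r) :
    ∫⁻ t in Ioi (0:ℝ), ENNReal.ofReal (t ^ (a - 1) * exp (-(r * t)))
      = ENNReal.ofReal ((1 / r) ^ a * Gamma a) := by
  rw [← integral_rpow_mul_exp_neg_mul_Ioi ha hr, ofReal_integral_eq_lintegral_ofReal
    (integrableOn_rpow_mul_exp_neg_mul_Ioi (by linarith) hr)]
  filter_upwards [ae_restrict_mem measurableSet_Ioi] with t (ht : 0 < t)
  positivity

theorem lintegral_ofReal_mul_exp_neg_mul_Ioi {c : ℝ} (hc : 0 < c) :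
    ∫⁻ t in Ioi (0:ℝ), ENNReal.ofReal t * ENNReal.ofReal (exp (-(t * c)))
      = ENNReal.ofReal (c ^ 2)⁻¹ := by
  have h := lintegral_rpow_mul_exp_neg_mul_Ioi two_pos hc
  rw [Gamma_two, mul_one, rpow_two, one_div, inv_pow] at h
  rw [← h]
  refine setLIntegral_congr_fun measurableSet_Ioi fun t (ht : 0 < t) => ?_
  rw [← ENNReal.ofReal_mul ht.le, mul_comm t c]
  norm_num

theorem lintegral_rpow_mul_exp_neg_mul_exp_neg_mul {a r : ℝ} (ha : -1 < a) (hr : -1 < r) :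
    ∫⁻ u in Ioi (0:ℝ), ENNReal.ofReal (u ^ a * exp (-u)) * ENNReal.ofReal (exp (-(r * u)))
      = ENNReal.ofReal (Gamma (a + 1) * (1 + r) ^ (-(a + 1))) := by
  rw [rpow_neg (by linarith), ← inv_rpow (by linarith), ← one_div, mul_comm,
    ← lintegral_rpow_mul_exp_neg_mul_Ioi (by linarith) (by linarith)]
  refine setLIntegral_congr_fun measurableSet_Ioi fun u (hu : 0 < u) => ?_
  rw [← ENNReal.ofReal_mul (by positivity), mul_assoc, ← exp_add]
  ring_nf

theorem lintegral_ofReal_mul_one_add_rpow_neg {a : ℝ} (ha : 2 < a) :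
    ∫⁻ r in Ioi (0:ℝ), ENNReal.ofReal (r * (1 + r) ^ (-a))
      = ENNReal.ofReal ((a - 1) * (a - 2))⁻¹ := by
  set G : ℝ → ℝ := fun r => (1 + r) ^ (2 - a) / (2 - a) - (1 + r) ^ (1 - a) / (1 - a)
  have hderiv : ∀ r ∈ Ici (0:ℝ), HasDerivAt G (r * (1 + r) ^ (-a)) r := by
    intro r (hr : 0 ≤ r)
    have h1r : 0 < 1 + r := by linarith
    have hbase := (hasDerivAt_id r).const_add 1
    have h := ((hbase.rpow_const (p := 2 - a) (Or.inl h1r.ne')).div_const (2 - a)).sub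
      ((hbase.rpow_const (p := 1 - a) (Or.inl h1r.ne')).div_const (1 - a))
    refine h.congr_deriv ?_
    rw [show 2 - a - 1 = -a + 1 by ring, show 1 - a - 1 = -a by ring, id,
      rpow_add_one h1r.ne']
    field_simp [show 2 - a ≠ 0 by linarith, show 1 - a ≠ 0 by linarith]
    ring
  have hnonneg : ∀ r ∈ Ioi (0:ℝ), 0 ≤ r * (1 + r) ^ (-a) :=
    fun r (hr : 0 < r) => by positivity
  have hlim : Tendsto G atTop (𝓝 0) := by
    have hshift : Tendsto (fun r : ℝ => 1 + r) atTop atTop :=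
      tendsto_atTop_add_const_left _ 1 tendsto_id
    have h := (((tendsto_rpow_neg_atTop (by linarith : 0 < a - 2)).comp hshift).div_const
      (2 - a)).sub (((tendsto_rpow_neg_atTop (by linarith : 0 < a - 1)).comp hshift).div_const
      (1 - a))
    simpa [G, neg_sub] using h
  rw [← ofReal_integral_eq_lintegral_ofReal
      (integrableOn_Ioi_deriv_of_nonneg' hderiv hnonneg hlim)
      (ae_restrict_of_forall_mem measurableSet_Ioi hnonneg),
    integral_Ioi_of_hasDerivAt_of_nonneg' hderiv hnonneg hlim]
  congr 1
  simp only [G, add_zero, one_rpow]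
  field_simp [show 2 - a ≠ 0 by linarith, show 1 - a ≠ 0 by linarith,
    show a - 1 ≠ 0 by linarith, show a - 2 ≠ 0 by linarith]
  ring

theorem lintegral_ofReal_mul_sq_lintegral_exp_neg {α : Type*} [MeasurableSpace α]
    {μ : Measure α} [SFinite μ] {φ : α → ℝ≥0∞} {ψ : α → ℝ} (hφ : Measurable φ)
    (hψ : Measurable ψ) (hψ_pos : ∀ᵐ u ∂μ, 0 < ψ u) :
    ∫⁻ t in Ioi (0:ℝ), ENNReal.ofReal t *
        (∫⁻ u, φ u * ENNReal.ofReal (exp (-(t * ψ u))) ∂μ) ^ 2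
      = ∫⁻ u, ∫⁻ v, φ u * φ v * ENNReal.ofReal ((ψ u + ψ v) ^ 2)⁻¹ ∂μ ∂μ := by
  have hexp : ∀ t u v, ENNReal.ofReal (exp (-(t * ψ u))) * ENNReal.ofReal (exp (-(t * ψ v)))
      = ENNReal.ofReal (exp (-(t * (ψ u + ψ v)))) := fun t u v => by
    rw [← ENNReal.ofReal_mul (exp_pos _).le, ← exp_add]; ring_nf
  calc _ = ∫⁻ t in Ioi (0:ℝ), ∫⁻ u, ∫⁻ v, φ u * φ v *
        (ENNReal.ofReal t * ENNReal.ofReal (exp (-(t * (ψ u + ψ v))))) ∂μ ∂μ := by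
        refine lintegral_congr fun t => ?_
        rw [sq, ← lintegral_lintegral_mul (by fun_prop) (by fun_prop),
          ← lintegral_const_mul _ (by fun_prop)]
        refine lintegral_congr fun u => ?_
        rw [← lintegral_const_mul _ (by fun_prop)]
        refine lintegral_congr fun v => ?_
        rw [← hexp]
        ring
    _ = ∫⁻ u, ∫⁻ v, (∫⁻ t in Ioi (0:ℝ), φ u * φ v *
        (ENNReal.ofReal t * ENNReal.ofReal (exp (-(t * (ψ u + ψ v)))))) ∂μ ∂μ := by
        rw [lintegral_lintegral_swap (by fun_prop)]
        exact lintegral_congr fun u => lintegral_lintegral_swap (by fun_prop)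
    _ = _ := by
        refine lintegral_congr_ae ?_
        filter_upwards [hψ_pos] with u hu
        refine lintegral_congr_ae ?_
        filter_upwards [hψ_pos] with v hv
        rw [lintegral_const_mul _ (by fun_prop),
          lintegral_ofReal_mul_exp_neg_mul_Ioi (by linarith)]

theorem integrableOn_rpow_mul_exp_neg_sub_div {a c : ℝ} (ha : -2 < a) (hc : 0 < c) :
    IntegrableOn (fun u : ℝ => u ^ a * exp (-u - c / u)) (Ioi 0) := by
  have hbound : ∀ u ∈ Ioi (0:ℝ),
      u ^ a * exp (-u - c / u) ≤ 2 / c ^ 2 * (u ^ (a + 2) * exp (-(1 * u))) := by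
    intro u (hu : 0 < u)
    have hquad : (c / u) ^ 2 / 2 ≤ exp (c / u) := by
      simpa using pow_div_factorial_le_exp (x := c / u) (div_pos hc hu).le 2
    have hexp : exp (-(c / u)) ≤ 2 * u ^ 2 / c ^ 2 := by
      rw [exp_neg, inv_le_comm₀ (exp_pos _) (by positivity)]
      calc (2 * u ^ 2 / c ^ 2)⁻¹ = (c / u) ^ 2 / 2 := by field_simp
        _ ≤ exp (c / u) := hquad
    calc u ^ a * exp (-u - c / u) = u ^ a * exp (-u) * exp (-(c / u)) := by
          rw [mul_assoc, ← exp_add, sub_eq_add_neg]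
      _ ≤ u ^ a * exp (-u) * (2 * u ^ 2 / c ^ 2) := by gcongr
      _ = 2 / c ^ 2 * (u ^ (a + 2) * exp (-(1 * u))) := by
          rw [rpow_add hu, rpow_two, one_mul]; ring
  refine ((integrableOn_rpow_mul_exp_neg_mul_Ioi (a := a + 2) (by linarith) one_pos).const_mul
    (2 / c ^ 2)).mono' (by fun_prop) ?_
  filter_upwards [ae_restrict_mem measurableSet_Ioi] with u (hu : 0 < u)
  rw [Real.norm_of_nonneg (by positivity)]
  exact hbound u hu

/-- `macdonaldIntegral a c = 2 c^{(a+1)/2} K_{a+1}(2√c)`. -/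
noncomputable def macdonaldIntegral (a c : ℝ) : ℝ :=
  ∫ u in Ioi (0:ℝ), u ^ a * exp (-u - c / u)

theorem macdonaldIntegral_nonneg (a c : ℝ) : 0 ≤ macdonaldIntegral a c :=
  setIntegral_nonneg measurableSet_Ioi fun u (hu : 0 < u) => by positivity

theorem measurable_macdonaldIntegral (a : ℝ) : Measurable (macdonaldIntegral a) := by
  have h : StronglyMeasurable (Function.uncurry fun (c u : ℝ) => u ^ a * exp (-u - c / u)) :=
    Measurable.stronglyMeasurable (by fun_prop)
  exact (h.integral_prod_right (ν := volume.restrict (Ioi 0))).measurable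

theorem ofReal_macdonaldIntegral_eq_lintegral {a c : ℝ} (ha : -2 < a) (hc : 0 < c) :
    ENNReal.ofReal (macdonaldIntegral a c)
      = ∫⁻ u in Ioi (0:ℝ), ENNReal.ofReal (u ^ a * exp (-u)) *
          ENNReal.ofReal (exp (-(c * u⁻¹))) := by
  rw [macdonaldIntegral, ofReal_integral_eq_lintegral_ofReal
    (integrableOn_rpow_mul_exp_neg_sub_div ha hc)
    (ae_restrict_of_forall_mem measurableSet_Ioi fun u (hu : 0 < u) => by positivity)]
  refine setLIntegral_congr_fun measurableSet_Ioi fun u (hu : 0 < u) => ?_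
  rw [← ENNReal.ofReal_mul (by positivity), mul_assoc, ← exp_add]
  ring_nf

theorem image_const_div_Ioi_zero {c : ℝ} (hc : 0 < c) : (fun w : ℝ => c / w) '' Ioi 0 = Ioi 0 := by
  ext t
  constructor
  · rintro ⟨w, hw, rfl⟩
    exact div_pos hc hw
  · intro (ht : 0 < t)
    exact ⟨c / t, div_pos hc ht, by field_simp⟩

theorem macdonaldIntegral_eq_rpow_mul {c : ℝ} (hc : 0 < c) (a : ℝ) :
    macdonaldIntegral a c = c ^ (a + 1) * macdonaldIntegral (-a - 2) c := by
  have hderiv : ∀ w ∈ Ioi (0:ℝ), HasDerivWithinAt (fun w => c / w) (-(c / w ^ 2)) (Ioi 0) w :=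
    fun w (hw : 0 < w) => by
      simpa [div_eq_mul_inv] using ((hasDerivAt_inv hw.ne').const_mul c).hasDerivWithinAt
  have hinj : InjOn (fun w : ℝ => c / w) (Ioi 0) := fun w (hw : 0 < w) v (hv : 0 < v) h => by
    field_simp at h
    exact h.symm
  rw [macdonaldIntegral, ← image_const_div_Ioi_zero hc,
    integral_image_eq_integral_abs_deriv_smul measurableSet_Ioi hderiv hinj, macdonaldIntegral,
    ← integral_const_mul]
  refine setIntegral_congr_fun measurableSet_Ioi fun w (hw : 0 < w) => ?_
  rw [abs_neg, abs_of_pos (by positivity), smul_eq_mul, div_rpow hc.le hw.le,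
    div_div_cancel₀ hc.ne', show -a - 2 = -(a + 1) + -1 by ring, rpow_add hw, rpow_neg hw.le,
    rpow_neg_one,
    rpow_add hc, rpow_add hw, rpow_one, rpow_one, show -(c / w) - w = -w - c / w by ring]
  field_simp

theorem besselK_eq_macdonaldIntegral {x : ℝ} (hx : 0 < x) (s : ℝ) :
    besselK s x = 1 / 2 * (x / 2) ^ (-s) * macdonaldIntegral (s - 1) ((x / 2) ^ 2) := by
  have hx2 : 0 < x / 2 := by positivity
  have hc : (0:ℝ) < (x / 2) ^ 2 := by positivity
  have hint : ∫ t in Ioi (0:ℝ), t ^ (-1 - s) * exp (-t - x ^ 2 / (4 * t))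
      = macdonaldIntegral (-1 - s) ((x / 2) ^ 2) :=
    setIntegral_congr_fun measurableSet_Ioi fun t _ => by ring_nf
  rw [besselK, hint, macdonaldIntegral_eq_rpow_mul hc, show -(-1 - s) - 2 = s - 1 by ring,
    ← rpow_natCast, ← rpow_mul hx2.le, ← mul_assoc, mul_assoc (1 / 2), ← rpow_add hx2,
    show s + ((2:ℕ):ℝ) * (-1 - s + 1) = -s by push_cast; ring]

theorem hasDerivAt_macdonaldIntegral {a c : ℝ} (ha : -1 < a) (hc : 0 < c) :
    HasDerivAt (macdonaldIntegral a) (-macdonaldIntegral (a - 1) c) c := by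
  have hbound : ∀ᵐ u ∂volume.restrict (Ioi 0), ∀ c' ∈ Ioi (c / 2),
      ‖-(u ^ (a - 1) * exp (-u - c' / u))‖ ≤ u ^ (a - 1) * exp (-u - c / 2 / u) := by
    filter_upwards [ae_restrict_mem measurableSet_Ioi] with u (hu : 0 < u) c' (hc' : c / 2 < c')
    rw [norm_neg, Real.norm_of_nonneg (by positivity)]
    gcongr
  have hdiff : ∀ᵐ u ∂volume.restrict (Ioi 0), ∀ c' ∈ Ioi (c / 2),
      HasDerivAt (fun c' => u ^ a * exp (-u - c' / u))
        (-(u ^ (a - 1) * exp (-u - c' / u))) c' := by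
    filter_upwards [ae_restrict_mem measurableSet_Ioi] with u (hu : 0 < u) c' _
    have := (((hasDerivAt_id c').div_const u).const_sub (-u)).exp.const_mul (u ^ a)
    refine this.congr_deriv ?_
    rw [rpow_sub_one hu.ne']
    simp only [id]
    field_simp
  have h := hasDerivAt_integral_of_dominated_loc_of_deriv_le
    (F := fun c' u => u ^ a * exp (-u - c' / u)) (Ioi_mem_nhds (half_lt_self hc))
    (Eventually.of_forall fun c' => (by fun_prop : Measurable _).aestronglyMeasurable)
    (integrableOn_rpow_mul_exp_neg_sub_div (by linarith) hc) (by fun_prop) hbound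
    (integrableOn_rpow_mul_exp_neg_sub_div (by linarith) (half_pos hc)) hdiff
  unfold macdonaldIntegral
  simpa only [integral_neg] using h.2

theorem deriv_eq_of_eqOn_macdonaldIntegral {F : ℝ → ℝ} {a C k y : ℝ} (ha : -1 < a)
    (hk : 0 < k) (hy : 0 < y)
    (hF : ∀ z ∈ Ioi (0:ℝ), F z = C * macdonaldIntegral a (k * z ^ 2)) :
    deriv F y = -(2 * k * y * C * macdonaldIntegral (a - 1) (k * y ^ 2)) := by
  have h := ((hasDerivAt_macdonaldIntegral ha (by positivity : 0 < k * y ^ 2)).comp y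
    ((hasDerivAt_pow 2 y).const_mul k)).const_mul C
  have hFeq : F =ᶠ[𝓝 y] fun z => C * macdonaldIntegral a (k * z ^ 2) := by
    filter_upwards [Ioi_mem_nhds hy] with z hz using hF z hz
  rw [(h.congr_of_eventuallyEq hFeq).deriv]
  push_cast
  ring

theorem integral_Ioi_smul_comp_mul_sq {E : Type*} [NormedAddCommGroup E] [NormedSpace ℝ E]
    {k : ℝ} (hk : 0 < k) (g : ℝ → E) :
    ∫ y in Ioi (0:ℝ), (2 * k * y) • g (k * y ^ 2) = ∫ t in Ioi (0:ℝ), g t := by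
  have himage : (fun y : ℝ => k * y ^ 2) '' Ioi 0 = Ioi 0 := by
    ext t
    constructor
    · rintro ⟨y, hy, rfl⟩
      exact mul_pos hk (pow_pos hy 2)
    · intro (ht : 0 < t)
      refine ⟨sqrt (t / k), sqrt_pos.mpr (div_pos ht hk), ?_⟩
      show k * sqrt (t / k) ^ 2 = t
      rw [sq_sqrt (div_pos ht hk).le]
      field_simp
  have hderiv : ∀ y ∈ Ioi (0:ℝ),
      HasDerivWithinAt (fun y => k * y ^ 2) (2 * k * y) (Ioi 0) y :=
    fun y _ => by simpa [mul_comm, mul_left_comm] using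
      ((hasDerivAt_pow 2 y).const_mul k).hasDerivWithinAt (s := Ioi 0)
  have hinj : InjOn (fun y : ℝ => k * y ^ 2) (Ioi 0) := fun y (hy : 0 < y) z (hz : 0 < z) h =>
    (pow_left_inj₀ hy.le hz.le two_ne_zero).mp (mul_left_cancel₀ hk.ne' h)
  calc ∫ y in Ioi (0:ℝ), (2 * k * y) • g (k * y ^ 2)
      = ∫ y in Ioi (0:ℝ), |2 * k * y| • g (k * y ^ 2) :=
        setIntegral_congr_fun measurableSet_Ioi fun y (hy : 0 < y) => by
          rw [abs_of_pos (by positivity)]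
    _ = ∫ t in (fun y : ℝ => k * y ^ 2) '' Ioi 0, g t :=
        (integral_image_eq_integral_abs_deriv_smul measurableSet_Ioi hderiv hinj g).symm
    _ = ∫ t in Ioi (0:ℝ), g t := by rw [himage]

theorem rpow_mul_besselK_eq_macdonaldIntegral (s : ℝ) {lam y : ℝ} (hlam : 0 < lam)
    (hy : 0 < y) :
    (2:ℝ) ^ (1 - s) / Gamma s * y ^ s * lam ^ (s / 2) * besselK s (y * sqrt lam)
      = (Gamma s)⁻¹ * macdonaldIntegral (s - 1) (lam / 4 * y ^ 2) := by
  have hsqrt : 0 < sqrt lam := sqrt_pos.mpr hlam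
  have hx : 0 < y * sqrt lam / 2 := by positivity
  have harg : (y * sqrt lam / 2) ^ 2 = lam / 4 * y ^ 2 := by
    rw [div_pow, mul_pow, sq_sqrt hlam.le]; ring
  have hpow : (2:ℝ) ^ (1 - s) * y ^ s * lam ^ (s / 2) * (y * sqrt lam / 2) ^ (-s) = 2 := by
    rw [rpow_neg hx.le, div_rpow (by positivity) zero_le_two, mul_rpow hy.le hsqrt.le,
      sqrt_eq_rpow, ← rpow_mul hlam.le, rpow_sub zero_lt_two, rpow_one,
      show 1 / 2 * s = s / 2 by ring]
    field_simp
  rw [besselK_eq_macdonaldIntegral (by positivity) s, harg]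
  linear_combination (Gamma s)⁻¹ * macdonaldIntegral (s - 1) (lam / 4 * y ^ 2) / 2 * hpow

theorem lintegral_ofReal_mul_macdonaldIntegral_sq {s : ℝ} (hs : 0 < s) :
    ∫⁻ t in Ioi (0:ℝ), ENNReal.ofReal (t * macdonaldIntegral (s - 2) t ^ 2)
      = ENNReal.ofReal (Gamma (s + 1) ^ 2 / (2 * s * (2 * s + 1))) := by
  have hsym : ∫⁻ u in Ioi (0:ℝ), ∫⁻ v in Ioi (0:ℝ),
        ENNReal.ofReal (u ^ (s - 2) * exp (-u)) * ENNReal.ofReal (v ^ (s - 2) * exp (-v)) *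
          ENNReal.ofReal ((u⁻¹ + v⁻¹) ^ 2)⁻¹
      = ∫⁻ u in Ioi (0:ℝ), ∫⁻ v in Ioi (0:ℝ), ENNReal.ofReal (u ^ s * exp (-u)) *
        ENNReal.ofReal (v ^ s * exp (-v)) * ENNReal.ofReal ((u + v) ^ 2)⁻¹ := by
    refine setLIntegral_congr_fun measurableSet_Ioi fun u (hu : 0 < u) => ?_
    refine setLIntegral_congr_fun measurableSet_Ioi fun v (hv : 0 < v) => ?_
    rw [← ENNReal.ofReal_mul (by positivity), ← ENNReal.ofReal_mul (by positivity),
      ← ENNReal.ofReal_mul (by positivity), ← ENNReal.ofReal_mul (by positivity),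
      rpow_sub hu, rpow_sub hv, rpow_two, rpow_two]
    congr 1
    field_simp
    ring
  calc
    _ = ∫⁻ t in Ioi (0:ℝ), ENNReal.ofReal t * (∫⁻ u in Ioi (0:ℝ),
          ENNReal.ofReal (u ^ (s - 2) * exp (-u)) * ENNReal.ofReal (exp (-(t * u⁻¹)))) ^ 2 := by
        refine setLIntegral_congr_fun measurableSet_Ioi fun t (ht : 0 < t) => ?_
        rw [ENNReal.ofReal_mul ht.le, ENNReal.ofReal_pow (macdonaldIntegral_nonneg _ _),
          ofReal_macdonaldIntegral_eq_lintegral (by linarith) ht]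
    _ = _ := lintegral_ofReal_mul_sq_lintegral_exp_neg (by fun_prop) measurable_inv
        (ae_restrict_of_forall_mem measurableSet_Ioi fun u (hu : 0 < u) => inv_pos.mpr hu)
    _ = _ := hsym
    _ = ∫⁻ r in Ioi (0:ℝ), ENNReal.ofReal r * (∫⁻ u in Ioi (0:ℝ),
          ENNReal.ofReal (u ^ s * exp (-u)) * ENNReal.ofReal (exp (-(r * u)))) ^ 2 :=
      (lintegral_ofReal_mul_sq_lintegral_exp_neg (ψ := fun u => u) (by fun_prop) measurable_id
        (ae_restrict_of_forall_mem measurableSet_Ioi fun u (hu : 0 < u) => hu)).symm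
    _ = ∫⁻ r in Ioi (0:ℝ), ENNReal.ofReal (Gamma (s + 1) ^ 2) *
          ENNReal.ofReal (r * (1 + r) ^ (-(2 * s + 2))) := by
        refine setLIntegral_congr_fun measurableSet_Ioi fun r (hr : 0 < r) => ?_
        have hpow : ((1 + r) ^ (-(s + 1))) ^ 2 = (1 + r) ^ (-(2 * s + 2)) := by
          rw [← rpow_mul_natCast (by positivity)]
          ring_nf
        rw [lintegral_rpow_mul_exp_neg_mul_exp_neg_mul (by linarith) (by linarith),
          ← ENNReal.ofReal_pow (by positivity), ← ENNReal.ofReal_mul hr.le,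
          ← ENNReal.ofReal_mul (by positivity), mul_pow, hpow]
        ring_nf
    _ = _ := by
        rw [lintegral_const_mul _ (by fun_prop), lintegral_ofReal_mul_one_add_rpow_neg
          (by linarith), ← ENNReal.ofReal_mul (by positivity)]
        congr 1
        ring

theorem integral_mul_macdonaldIntegral_sq {s : ℝ} (hs : 0 < s) :
    ∫ t in Ioi (0:ℝ), t * macdonaldIntegral (s - 2) t ^ 2
      = Gamma (s + 1) ^ 2 / (2 * s * (2 * s + 1)) := by
  have hmeas : AEStronglyMeasurable (fun t => t * macdonaldIntegral (s - 2) t ^ 2)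
      (volume.restrict (Ioi 0)) := by
    have := measurable_macdonaldIntegral (s - 2)
    fun_prop
  rw [integral_eq_lintegral_of_nonneg_ae (ae_restrict_of_forall_mem measurableSet_Ioi
    fun t (ht : 0 < t) => by positivity) hmeas, lintegral_ofReal_mul_macdonaldIntegral_sq hs,
    ENNReal.toReal_ofReal (by positivity)]

theorem bessel_multiplier_constant_general
    (s lam : ℝ) (hs : 0 < s) (hlam : 0 < lam)
    (F : ℝ → ℝ)
    (hF : ∀ y, F y = (2:ℝ) ^ (1-s) / Real.Gamma s * y ^ s * lam ^ (s/2)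
      * besselK s (y * Real.sqrt lam)) :
    (∫ y in Set.Ioi (0:ℝ), (y/(2*s)) * (deriv F y)^2 = 1/(2*(2 - (1 - 2*s)))) ∧
    (∫ y in Set.Ioi (0:ℝ), (y/(2*s)) * (deriv F y)^2 = 1/(2*(1 + 2*s))) := by
  have hF' : ∀ y ∈ Ioi (0:ℝ),
      F y = (Gamma s)⁻¹ * macdonaldIntegral (s - 1) (lam / 4 * y ^ 2) :=
    fun y hy => by rw [hF, rpow_mul_besselK_eq_macdonaldIntegral s hlam hy]
  have hΓ : 0 < Gamma s := Gamma_pos_of_pos hs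
  have key : ∫ y in Ioi (0:ℝ), y / (2 * s) * deriv F y ^ 2 = 1 / (2 * (1 + 2 * s)) := calc
    _ = ∫ y in Ioi (0:ℝ), (2 * (lam / 4) * y) • (lam / 4 * y ^ 2 *
          macdonaldIntegral (s - 2) (lam / 4 * y ^ 2) ^ 2 / (s * Gamma s ^ 2)) :=
        setIntegral_congr_fun measurableSet_Ioi fun y hy => by
          rw [deriv_eq_of_eqOn_macdonaldIntegral (by linarith) (by positivity) hy hF',
            smul_eq_mul, show s - 1 - 1 = s - 2 by ring]
          field_simp
    _ = (∫ t in Ioi (0:ℝ), t * macdonaldIntegral (s - 2) t ^ 2) / (s * Gamma s ^ 2) :=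
        (integral_Ioi_smul_comp_mul_sq (by positivity) fun t =>
          t * macdonaldIntegral (s - 2) t ^ 2 / (s * Gamma s ^ 2)).trans (integral_div _ _)
    _ = _ := by
        rw [integral_mul_macdonaldIntegral_sq hs, Gamma_add_one hs.ne']
        field_simp
        ring
  exact ⟨by rw [key]; ring_nf, key⟩

/-- For `0 < s < 1` and `λ > 0`, with `K(y,λ) = (2^{1−s}/Γ(s)) y^s λ^{s/2} K_s(yλ^{1/2})` and
`G(∞,y) = y/(2s)`, one has `∫₀^∞ G(∞,y)(∂_y K(y,λ))² dy = 1/(2(2−γ))` with `γ = 1 − 2s`,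
i.e. the multiplier for the Bessel vertical diffusion is the constant `1/(2(1+2s))`. -/
theorem bessel_multiplier_constant
    (s lam : ℝ) (hs : 0 < s) (hs1 : s < 1) (hlam : 0 < lam)
    (F : ℝ → ℝ)
    (hF : ∀ y, F y = (2:ℝ) ^ (1-s) / Real.Gamma s * y ^ s * lam ^ (s/2)
      * besselK s (y * Real.sqrt lam)) :
    (∫ y in Set.Ioi (0:ℝ), (y/(2*s)) * (deriv F y)^2 = 1/(2*(2 - (1 - 2*s)))) ∧
    (∫ y in Set.Ioi (0:ℝ), (y/(2*s)) * (deriv F y)^2 = 1/(2*(1 + 2*s))) :=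
  bessel_multiplier_constant_general s lam hs hlam F hF
end
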